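/- arXiv:math/0607254 — 3 statements merged into one kernel-verified Lean document; each statement's English description precedes it below -/
import Mathlib

section
/- Let C be a code over an alphabet A, and let Z_n, Q_n (n ≥ 1) be defined by the Lazard right length recurrence. Then for every n ≥ 1, both Z_n and Q_n are codes over A: whenever c_1⋯c_r = c'_1⋯c'_s with all c_i, c'_j ∈ Z_n (respectively all in Q_n), then r = s and c_i = c'_i for all i. -/
/-- A code over the alphabet `A`: a set of nonempty words with unique
factorization. -/
def IsCode {A : Type*} (C : Set (FreeMonoid A)) : Prop :=
  (∀ c ∈ C, c ≠ 1) ∧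
  ∀ l l' : List (FreeMonoid A),
    (∀ c ∈ l, c ∈ C) → (∀ c ∈ l', c ∈ C) → l.prod = l'.prod → l = l'

/-- The sets `Z_n` of the Lazard right length recurrence associated to a code `C`:
`Z_1 = C`, `Z_{n+1} = (Z_n \ Q_n)·Q_n*` where `Q_n = {w ∈ Z_n : |w| = n}`.
(The value at `0` is junk, set to `∅`.) -/
def lazardZ {A : Type*} (C : Set (FreeMonoid A)) : ℕ → Set (FreeMonoid A)
  | 0 => ∅
  | 1 => C
  | (n + 2) =>
      {w | ∃ z ∈ lazardZ C (n + 1), z.length ≠ n + 1 ∧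
        ∃ u ∈ Submonoid.closure
          {v | v ∈ lazardZ C (n + 1) ∧ v.length = n + 1}, w = z * u}

/-- The sets `Q_n = Z_n ∩ A^n` of the Lazard right length recurrence. -/
def lazardQ {A : Type*} (C : Set (FreeMonoid A)) (n : ℕ) : Set (FreeMonoid A) :=
  {w | w ∈ lazardZ C n ∧ w.length = n}

/-!
If `Z` is a code and `Q ⊆ Z`, every word of `(Z \ Q)·Q*` is the product of a block
`z q₁ ⋯ q_k` with `z ∈ Z \ Q` and all `qᵢ ∈ Q`. Flattening the blocks turns a factorization
over `(Z \ Q)·Q*` into one over `Z`, which is unique; and the flattened list determines the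
blocks, which begin exactly at its entries outside `Q`. So `(Z \ Q)·Q*` is again a code, and by
induction so is every `Z_n`, hence also its subset `Q_n`.
-/

open Pointwise

namespace List

variable {α : Type*}

def IsLeaderBlock (Q : Set α) (b : List α) : Prop :=
  ∃ z ∉ Q, ∃ t, b = z :: t ∧ ∀ q ∈ t, q ∈ Q

theorem splitBy_flatten_of_isLeaderBlock {Q : Set α} [DecidablePred (· ∈ Q)]
    {L : List (List α)} (hL : ∀ b ∈ L, IsLeaderBlock Q b) :
    L.flatten.splitBy (fun _ y => decide (y ∈ Q)) = L := by
  refine splitBy_flatten (fun h => ?_) (fun b hb => ?_) (Pairwise.isChain ?_)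
  · obtain ⟨_, _, _, h, _⟩ := hL [] h
    exact nomatch h
  · obtain ⟨z, -, t, rfl, ht⟩ := hL b hb
    exact Pairwise.isChain
      (pairwise_cons.2 ⟨by simpa, pairwise_of_forall_mem_list fun _ _ => by simpa⟩)
  · refine pairwise_of_forall_mem_list fun a ha b hb => ?_
    obtain ⟨-, -, -, rfl, -⟩ := hL a ha
    obtain ⟨z, hz, t, rfl, -⟩ := hL b hb
    exact ⟨cons_ne_nil _ _, cons_ne_nil _ _, decide_eq_false hz⟩

theorem eq_of_flatten_eq_of_isLeaderBlock {Q : Set α} {L L' : List (List α)}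
    (hL : ∀ b ∈ L, IsLeaderBlock Q b) (hL' : ∀ b ∈ L', IsLeaderBlock Q b)
    (h : L.flatten = L'.flatten) : L = L' := by
  classical
  rw [← splitBy_flatten_of_isLeaderBlock hL, h, splitBy_flatten_of_isLeaderBlock hL']

end List

theorem exists_isLeaderBlock_prod_eq {M : Type*} [Monoid M] {Z Q : Set M} (hQ : Q ⊆ Z) {w : M}
    (hw : w ∈ (Z \ Q) * (Submonoid.closure Q : Set M)) :
    ∃ b : List M, b.IsLeaderBlock Q ∧ (∀ c ∈ b, c ∈ Z) ∧ b.prod = w := by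
  obtain ⟨z, ⟨hzZ, hzQ⟩, u, hu, rfl⟩ := Set.mem_mul.1 hw
  obtain ⟨t, htQ, rfl⟩ := Submonoid.exists_list_of_mem_closure hu
  refine ⟨z :: t, ⟨z, hzQ, t, rfl, htQ⟩, ?_, List.prod_cons⟩
  simpa using ⟨hzZ, fun c hc => hQ (htQ c hc)⟩

namespace IsCode

variable {A : Type*} {Z Q : Set (FreeMonoid A)}

theorem subset (hZ : IsCode Z) (hQ : Q ⊆ Z) : IsCode Q :=
  ⟨fun c hc => hZ.1 c (hQ hc), fun l l' hl hl' =>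
    hZ.2 l l' (fun c hc => hQ (hl c hc)) (fun c hc => hQ (hl' c hc))⟩

theorem diff_mul_closure (hZ : IsCode Z) (hQ : Q ⊆ Z) :
    IsCode ((Z \ Q) * (Submonoid.closure Q : Set (FreeMonoid A))) := by
  set S := (Z \ Q) * (Submonoid.closure Q : Set (FreeMonoid A))
  refine ⟨?_, fun l l' hl hl' hprod => ?_⟩
  · intro w hw h
    obtain ⟨z, ⟨hz, -⟩, u, -, rfl⟩ := Set.mem_mul.1 hw
    exact hZ.1 z hz (eq_one_of_mul_right' h)
  choose! block hblock hblockZ hblock_prod using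
    fun w (hw : w ∈ S) => exists_isLeaderBlock_prod_eq hQ hw
  have hprod_map {l : List (FreeMonoid A)} (hl : ∀ w ∈ l, w ∈ S) :
      (l.map block).map List.prod = l := by
    rw [List.map_map]
    exact List.map_congr_left (fun w hw => hblock_prod w (hl w hw)) |>.trans l.map_id
  have hisBlock {l : List (FreeMonoid A)} (hl : ∀ w ∈ l, w ∈ S) :
      ∀ b ∈ l.map block, b.IsLeaderBlock Q := by
    simp only [List.mem_map]
    rintro _ ⟨w, hw, rfl⟩
    exact hblock w (hl w hw)
  have hmemZ {l : List (FreeMonoid A)} (hl : ∀ w ∈ l, w ∈ S) :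
      ∀ c ∈ (l.map block).flatten, c ∈ Z := by
    simp only [List.mem_flatten, List.mem_map]
    rintro c ⟨_, ⟨w, hw, rfl⟩, hc⟩
    exact hblockZ w (hl w hw) c hc
  have hflat : (l.map block).flatten = (l'.map block).flatten := by
    refine hZ.2 _ _ (hmemZ hl) (hmemZ hl') ?_
    rw [List.prod_flatten, List.prod_flatten, hprod_map hl, hprod_map hl', hprod]
  rw [← hprod_map hl, ← hprod_map hl',
    List.eq_of_flatten_eq_of_isLeaderBlock (hisBlock hl) (hisBlock hl') hflat]

end IsCode

theorem lazardZ_add_two {A : Type*} (C : Set (FreeMonoid A)) (n : ℕ) :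
    lazardZ C (n + 2) = (lazardZ C (n + 1) \ lazardQ C (n + 1)) *
      (Submonoid.closure (lazardQ C (n + 1)) : Set (FreeMonoid A)) := by
  ext w
  constructor
  · rintro ⟨z, hz, hlen, u, hu, rfl⟩
    exact ⟨z, ⟨hz, fun hzQ => hlen hzQ.2⟩, u, hu, rfl⟩
  · rintro ⟨z, ⟨hz, hzQ⟩, u, hu, rfl⟩
    exact ⟨z, hz, fun hlen => hzQ ⟨hz, hlen⟩, u, hu, rfl⟩

theorem isCode_lazardZ {A : Type*} {C : Set (FreeMonoid A)} (hC : IsCode C) {n : ℕ}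
    (hn : 1 ≤ n) :
    IsCode (lazardZ C n) := by
  induction n, hn using Nat.le_induction with
  | base => exact hC
  | succ n hn ih =>
    obtain ⟨m, rfl⟩ := Nat.exists_eq_add_of_le' hn
    rw [lazardZ_add_two]
    exact ih.diff_mul_closure fun _ hw => hw.1

/-- Each `Z_n` and each `Q_n` of the Lazard right length recurrence of a code
is again a code. -/
theorem lazardZ_isCode_and_lazardQ_isCode {A : Type*} (C : Set (FreeMonoid A))
    (hC : IsCode C) (n : ℕ) (hn : 1 ≤ n) :
    IsCode (lazardZ C n) ∧ IsCode (lazardQ C n) :=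
  have hZ := isCode_lazardZ hC hn
  ⟨hZ, hZ.subset fun _ hw => hw.1⟩
end

section
/- For an integer n ≥ 1, let F = Σ_{k≥0} (binom(nk, k)/((n−1)k+1)) X^k ∈ ℚ[[X]] be the Fuss–Catalan power series. Then n·X·F′ = F · Σ_{j≥1} binom(nj, j) X^j in ℚ[[X]], where F′ is the formal derivative of F. (Equivalently, F is the image under the map e of the Witt vector (1/n)·*binom(n,1), whose ghost components are binom(nj,j)/n.) -/
/-!
Write `c k = binom(nk, k)/((n-1)k+1)`. Comparing coefficients of `X^(k+1)`, the theorem says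
`∑_{i+j=k} c i * binom(n(j+1), j+1) = n(k+1) c(k+1) = n * binom(n(k+1), k)`.
This is the case `x = 0` of the Hagen–Rothe type convolution
`∑_{i+j=k} c i * binom(x + nj, j) = binom(x + nk + 1, k)`, which we prove for all integers `x`
by induction on `k`. By Pascal's rule the defect (left minus right side) at `k + 1` changes, when
`x` increases by one, by the defect at `k` taken at `x + n`; so it is `1`-periodic in `x`.
Comparing its values at `x = -1` and `x = 0`, where all binomial coefficients are ordinary ones,
pins down the sum `∑_{i+j=k} c i * binom(n(j+1), j+1)`, and with it the value at `x = 0`.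
-/

open PowerSeries Finset Finset.Nat

noncomputable def fussCatalan (n k : ℕ) : ℚ :=
  (Nat.choose (n * k) k : ℚ) / (((n : ℚ) - 1) * k + 1)

section FussCatalan

variable {n : ℕ}

@[simp]
lemma fussCatalan_zero_right (n : ℕ) : fussCatalan n 0 = 1 := by
  simp [fussCatalan]

lemma fussCatalan_denom_pos (hn : 1 ≤ n) (k : ℕ) : 0 < ((n : ℚ) - 1) * k + 1 := by
  have : (0 : ℚ) ≤ n - 1 := sub_nonneg.mpr (by exact_mod_cast hn)
  positivity

lemma succ_mul_fussCatalan_succ (hn : 1 ≤ n) (k : ℕ) :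
    ((k : ℚ) + 1) * fussCatalan n (k + 1) = Nat.choose (n * (k + 1)) k := by
  have hle : k ≤ n * (k + 1) := le_trans (Nat.le_succ k) (Nat.le_mul_of_pos_left _ hn)
  have h : (Nat.choose (n * (k + 1)) (k + 1) : ℚ) * (k + 1) =
      Nat.choose (n * (k + 1)) k * ((n : ℚ) * (k + 1) - k) := by
    have := congrArg (Nat.cast : ℕ → ℚ) (Nat.choose_succ_right_eq (n * (k + 1)) k)
    push_cast [hle] at this
    linear_combination this
  have hd := (fussCatalan_denom_pos hn (k + 1)).ne'
  rw [fussCatalan, mul_div_assoc', div_eq_iff hd]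
  push_cast
  linear_combination h

lemma fussCatalan_succ_add_mul_choose (hn : 1 ≤ n) (k : ℕ) :
    fussCatalan n (k + 1) + n * Nat.choose (n * (k + 1)) k =
      Nat.choose (n * (k + 1) + 1) (k + 1) := by
  have hd := (fussCatalan_denom_pos hn (k + 1)).ne'
  have hc : (((n : ℚ) - 1) * (k + 1) + 1) * fussCatalan n (k + 1) =
      Nat.choose (n * (k + 1)) (k + 1) := by
    rw [fussCatalan]
    push_cast at hd ⊢
    exact mul_div_cancel₀ _ hd
  have hpascal : (Nat.choose (n * (k + 1) + 1) (k + 1) : ℚ) =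
      Nat.choose (n * (k + 1)) k + Nat.choose (n * (k + 1)) (k + 1) := by
    exact_mod_cast Nat.choose_succ_succ' (n * (k + 1)) k
  rw [hpascal]
  linear_combination hc - ((n : ℚ) - 1) * succ_mul_fussCatalan_succ hn k

noncomputable def fussCatalanDefect (n k : ℕ) (x : ℚ) : ℚ :=
  (∑ p ∈ antidiagonal k, fussCatalan n p.1 * Ring.choose (x + n * p.2) p.2) -
    Ring.choose (x + n * k + 1) k

lemma fussCatalanDefect_succ_add_one (n k : ℕ) (x : ℚ) :
    fussCatalanDefect n (k + 1) (x + 1) =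
      fussCatalanDefect n (k + 1) x + fussCatalanDefect n k (x + n) := by
  have hsum : ∀ p ∈ antidiagonal k,
      fussCatalan n p.1 * Ring.choose (x + 1 + n * ↑(p.2 + 1)) (p.2 + 1) =
        fussCatalan n p.1 * Ring.choose (x + n * ↑(p.2 + 1)) (p.2 + 1) +
          fussCatalan n p.1 * Ring.choose (x + n + n * p.2) p.2 := by
    intro p _
    rw [show x + 1 + n * ↑(p.2 + 1) = x + n * ↑(p.2 + 1) + 1 by ring, Ring.choose_succ_succ,
      show x + n * ↑(p.2 + 1) = x + n + n * p.2 by push_cast; ring]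
    ring
  have hrhs : Ring.choose (x + 1 + n * ↑(k + 1) + 1) (k + 1) =
      Ring.choose (x + n * ↑(k + 1) + 1) (k + 1) + Ring.choose (x + n + n * k + 1) k := by
    rw [show x + 1 + n * ↑(k + 1) + 1 = x + n * ↑(k + 1) + 1 + 1 by ring, Ring.choose_succ_succ,
      show x + n * ↑(k + 1) + 1 = x + n + n * k + 1 by push_cast; ring]
    ring
  unfold fussCatalanDefect
  rw [sum_antidiagonal_succ', sum_antidiagonal_succ', sum_congr rfl hsum, sum_add_distrib, hrhs,
    Ring.choose_zero_right, Ring.choose_zero_right]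
  ring

lemma fussCatalanDefect_succ_zero (n k : ℕ) :
    fussCatalanDefect n (k + 1) 0 =
      (∑ p ∈ antidiagonal k, fussCatalan n p.1 * Nat.choose (n * (p.2 + 1)) (p.2 + 1)) +
        fussCatalan n (k + 1) - Nat.choose (n * (k + 1) + 1) (k + 1) := by
  have hnat : ∀ m j : ℕ, Ring.choose (0 + n * (m : ℚ)) j = Nat.choose (n * m) j := by
    intro m j
    rw [zero_add, ← Nat.cast_mul, Ring.choose_natCast]
  unfold fussCatalanDefect
  rw [sum_antidiagonal_succ', Nat.cast_zero, mul_zero, Ring.choose_zero_right,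
    show (0 : ℚ) + n * ↑(k + 1) + 1 = ↑(n * (k + 1) + 1) by push_cast; ring, Ring.choose_natCast]
  simp only [hnat]
  ring

lemma natCast_mul_choose_mul_succ_sub_one (hn : 1 ≤ n) (j : ℕ) :
    (n : ℚ) * Ring.choose ((n : ℚ) * (j + 1) - 1) (j + 1) =
      (n - 1) * Nat.choose (n * (j + 1)) (j + 1) := by
  obtain ⟨m, hm⟩ : ∃ m, n * (j + 1) = m + 1 := Nat.exists_eq_succ_of_ne_zero (by positivity)
  have hcast : (n : ℚ) * (j + 1) - 1 = m := by
    have := congrArg (Nat.cast : ℕ → ℚ) hm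
    push_cast at this
    linarith
  have hle : j ≤ m := by nlinarith
  have h := congrArg (Nat.cast : ℕ → ℚ) (Nat.choose_mul_succ_eq m (j + 1))
  push_cast [hle] at h
  rw [← hcast] at h
  rw [hcast, Ring.choose_natCast, hm]
  apply mul_right_cancel₀ (show (j : ℚ) + 1 ≠ 0 by positivity)
  linear_combination h

lemma natCast_mul_fussCatalanDefect_succ_neg_one (hn : 1 ≤ n) (k : ℕ) :
    n * fussCatalanDefect n (k + 1) (-1) =
      (n - 1) * (∑ p ∈ antidiagonal k, fussCatalan n p.1 * Nat.choose (n * (p.2 + 1)) (p.2 + 1)) +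
        n * fussCatalan n (k + 1) - n * Nat.choose (n * (k + 1)) (k + 1) := by
  have hsum : ∀ p ∈ antidiagonal k,
      n * (fussCatalan n p.1 * Ring.choose ((-1 : ℚ) + n * ↑(p.2 + 1)) (p.2 + 1)) =
        (n - 1) * (fussCatalan n p.1 * Nat.choose (n * (p.2 + 1)) (p.2 + 1)) := by
    intro p _
    rw [show (-1 : ℚ) + n * ↑(p.2 + 1) = n * (p.2 + 1) - 1 by push_cast; ring,
      mul_left_comm, natCast_mul_choose_mul_succ_sub_one hn]
    ring
  unfold fussCatalanDefect
  rw [sum_antidiagonal_succ', mul_sub, mul_add, mul_sum, sum_congr rfl hsum, ← mul_sum,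
    Nat.cast_zero, mul_zero, Ring.choose_zero_right,
    show (-1 : ℚ) + n * ↑(k + 1) + 1 = ↑(n * (k + 1)) by push_cast; ring, Ring.choose_natCast]
  ring

lemma sum_fussCatalan_mul_choose_of_fussCatalanDefect_eq_zero (hn : 1 ≤ n) (k : ℕ)
    (h : fussCatalanDefect n k (n - 1) = 0) :
    ∑ p ∈ antidiagonal k, fussCatalan n p.1 * Nat.choose (n * (p.2 + 1)) (p.2 + 1) =
      n * Nat.choose (n * (k + 1)) k := by
  have hperiod := fussCatalanDefect_succ_add_one n k (-1)
  rw [neg_add_cancel, show (-1 : ℚ) + n = n - 1 by ring, h, add_zero] at hperiod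
  have hpascal : (Nat.choose (n * (k + 1) + 1) (k + 1) : ℚ) =
      Nat.choose (n * (k + 1)) k + Nat.choose (n * (k + 1)) (k + 1) := by
    exact_mod_cast Nat.choose_succ_succ' (n * (k + 1)) k
  linear_combination natCast_mul_fussCatalanDefect_succ_neg_one hn k -
    n * fussCatalanDefect_succ_zero n k + n * hperiod + n * hpascal

lemma fussCatalanDefect_intCast_eq_zero (hn : 1 ≤ n) (k : ℕ) (x : ℤ) :
    fussCatalanDefect n k x = 0 := by
  induction k generalizing x with
  | zero => simp [fussCatalanDefect]
  | succ k ih =>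
    have hsum := sum_fussCatalan_mul_choose_of_fussCatalanDefect_eq_zero hn k
      (by exact_mod_cast ih (n - 1))
    have hzero : fussCatalanDefect n (k + 1) 0 = 0 := by
      rw [fussCatalanDefect_succ_zero, hsum]
      linear_combination fussCatalan_succ_add_mul_choose hn k
    have hperiodic : Function.Periodic (fun y : ℤ => fussCatalanDefect n (k + 1) y) 1 := by
      intro y
      have hy := ih (y + n)
      push_cast at hy ⊢
      rw [fussCatalanDefect_succ_add_one, hy, add_zero]
    simpa [hzero] using hperiodic.int_mul_eq x

lemma sum_fussCatalan_mul_choose (hn : 1 ≤ n) (k : ℕ) :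
    ∑ p ∈ antidiagonal k, fussCatalan n p.1 * Nat.choose (n * (p.2 + 1)) (p.2 + 1) =
      n * Nat.choose (n * (k + 1)) k :=
  sum_fussCatalan_mul_choose_of_fussCatalanDefect_eq_zero hn k
    (by exact_mod_cast fussCatalanDefect_intCast_eq_zero hn k (n - 1))

end FussCatalan

/-- The Fuss–Catalan power series `F = Σ_k binom(nk,k)/((n−1)k+1) X^k`
satisfies the differential equation `n·X·F′ = F · Σ_{j≥1} binom(nj,j) X^j`,
i.e. it is the image under `e` of the Witt vector `(1/n)·*binom(n,1)`, whose
ghost components are `binom(nj,j)/n`. -/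
theorem fuss_catalan_series_log_derivative (n : ℕ) (hn : 1 ≤ n) :
    (n : ℚ⟦X⟧) * X *
        (d⁄dX ℚ (PowerSeries.mk fun k =>
          (Nat.choose (n * k) k : ℚ) / (((n : ℚ) - 1) * k + 1))) =
      (PowerSeries.mk fun k => (Nat.choose (n * k) k : ℚ) / (((n : ℚ) - 1) * k + 1)) *
        (PowerSeries.mk fun j => if j = 0 then 0 else (Nat.choose (n * j) j : ℚ)) := by
  change (n : ℚ⟦X⟧) * X * d⁄dX ℚ (PowerSeries.mk (fussCatalan n)) =
    PowerSeries.mk (fussCatalan n) * _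
  ext (_ | k)
  · simp [mul_comm _ X, coeff_mul]
  · rw [← map_natCast (C (R := ℚ)), mul_assoc, coeff_C_mul, coeff_succ_X_mul, coeff_derivative,
      coeff_mk, coeff_mul, sum_antidiagonal_succ']
    simp only [coeff_mk, Nat.succ_ne_zero, if_false, if_true, mul_zero, zero_add]
    rw [sum_fussCatalan_mul_choose hn, ← succ_mul_fussCatalan_succ hn]
    ring
end

section
/- Fix integers n ≥ 1 and p ≥ 1, and let ω ∈ ℂ be a primitive p-th root of unity. Let G, H ∈ ℂ[[X]] be the (unique) formal power series with constant term 1 satisfying X·G′ = G · Σ_{j≥1} binom(nj, j) X^j and X·H′ = H · Σ_{m≥1} binom(nmp, mp) X^m. Then ∏_{k=0}^{p−1} G(ω^k X) = H(X^p) in ℂ[[X]], where G(ω^k X) denotes the rescaling of G by ω^k and H(X^p) the substitution of X^p into H. (This is the identity e(*binom(np, p)) = ∏_{k=0}^{p−1} e(*binom(n,1))(ω^k z^{1/p}).) -/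
/-!
Both sides solve the Euler-type equation `X Y' = Y Φ` with constant term `1`, where
`Φ = ∑ₖ F(ωᵏX) = p F_H(Xᵖ)` with `F`, `F_H` the right-hand factors in `hG`, `hH`: the operator
`X d/dX` commutes with rescaling, turns products into sums of logarithmic derivatives and
multiplies by `p` under `X ↦ Xᵖ`, while averaging over the rescalings by `ωᵏ` keeps exactly the
coefficients in degrees divisible by `p`. Such an equation has at most one solution with a given
constant term.
-/

open PowerSeries

namespace PowerSeries

variable {R : Type*} [CommRing R]

theorem coeff_X_mul_derivative (f : R⟦X⟧) (k : ℕ) :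
    coeff k (X * d⁄dX R f) = k * coeff k f := by
  cases k with
  | zero => simp
  | succ k => rw [coeff_succ_X_mul, coeff_derivative, mul_comm]; push_cast; rfl

theorem constantCoeff_rescale (c : R) (f : R⟦X⟧) :
    constantCoeff (rescale c f) = constantCoeff f := by
  rw [← coeff_zero_eq_constantCoeff_apply, coeff_rescale, pow_zero, one_mul,
    coeff_zero_eq_constantCoeff_apply]

theorem rescale_X_mul_derivative (c : R) (f : R⟦X⟧) :
    rescale c (X * d⁄dX R f) = X * d⁄dX R (rescale c f) := by
  ext k
  simp only [coeff_rescale, coeff_X_mul_derivative]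
  ring

theorem X_mul_derivative_expand (p : ℕ) (hp : p ≠ 0) (f : R⟦X⟧) :
    X * d⁄dX R (expand p hp f) = p • expand p hp (X * d⁄dX R f) := by
  ext k
  rw [map_nsmul, coeff_X_mul_derivative]
  by_cases hk : p ∣ k
  · obtain ⟨m, rfl⟩ := hk
    simp only [coeff_expand_mul, coeff_X_mul_derivative, nsmul_eq_mul]
    push_cast
    ring
  · rw [coeff_expand_of_not_dvd p hp _ hk, coeff_expand_of_not_dvd p hp _ hk, mul_zero, smul_zero]

theorem X_mul_derivative_prod {ι : Type*} (s : Finset ι) (f F : ι → R⟦X⟧)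
    (h : ∀ i ∈ s, X * d⁄dX R (f i) = f i * F i) :
    X * d⁄dX R (∏ i ∈ s, f i) = (∏ i ∈ s, f i) * ∑ i ∈ s, F i := by
  induction s using Finset.cons_induction with
  | empty => simp
  | cons a s ha ih =>
    rw [Finset.prod_cons, Finset.sum_cons, Derivation.leibniz, smul_eq_mul, smul_eq_mul]
    linear_combination f a * ih (fun i hi => h i (Finset.mem_cons_of_mem hi))
      + (∏ i ∈ s, f i) * h a (Finset.mem_cons_self a s)

theorem eq_of_X_mul_derivative_eq_mul [IsDomain R] [CharZero R] {F f g : R⟦X⟧}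
    (hF : constantCoeff F = 0) (h0 : constantCoeff f = constantCoeff g)
    (hf : X * d⁄dX R f = f * F) (hg : X * d⁄dX R g = g * F) : f = g := by
  -- The lowest nonzero coefficient `c` of `f - g`, in degree `m ≥ 1`, would satisfy `m * c = 0`.
  rw [← sub_eq_zero]
  by_contra hne
  set m := (f - g).order.toNat
  have hm : m ≠ 0 := by
    intro hm
    apply coeff_order hne
    rw [show (f - g).order.toNat = 0 from hm, coeff_zero_eq_constantCoeff_apply, map_sub, h0,
      sub_self]
  have hlt : (m : ℕ∞) < ((f - g) * F).order := by
    calc (m : ℕ∞) < m + 1 := by exact_mod_cast m.lt_succ_self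
      _ = (f - g).order + 1 := by rw [coe_toNat_order hne]
      _ ≤ (f - g).order + F.order := by
          gcongr; exact (one_le_order_iff_constCoeff_eq_zero).mpr hF
      _ ≤ ((f - g) * F).order := le_order_mul _ _
  have hsub : X * d⁄dX R (f - g) = (f - g) * F := by
    rw [map_sub, mul_sub, hf, hg, sub_mul]
  have hcoeff := congrArg (coeff m) hsub
  rw [coeff_X_mul_derivative, coeff_of_lt_order m hlt, mul_eq_zero] at hcoeff
  exact hcoeff.elim (by exact_mod_cast hm) (coeff_order hne)

end PowerSeries

theorem IsPrimitiveRoot.sum_pow_pow_eq_ite {R : Type*} [CommRing R] [IsDomain R] {ω : R} {p : ℕ}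
    (hω : IsPrimitiveRoot ω p) (j : ℕ) :
    ∑ k ∈ Finset.range p, (ω ^ k) ^ j = if p ∣ j then (p : R) else 0 := by
  simp_rw [← pow_mul, mul_comm _ j, pow_mul]
  split_ifs with hj
  · simp [(hω.pow_eq_one_iff_dvd j).mpr hj]
  · have hne : ω ^ j ≠ 1 := fun h => hj ((hω.pow_eq_one_iff_dvd j).mp h)
    refine eq_zero_of_ne_zero_of_mul_right_eq_zero (sub_ne_zero.mpr hne) ?_
    rw [geom_sum_mul, ← pow_mul, mul_comm, pow_mul, hω.pow_eq_one, one_pow, sub_self]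

theorem IsPrimitiveRoot.sum_rescale_pow_eq_nsmul_expand {R : Type*} [CommRing R] [IsDomain R]
    {ω : R} {p : ℕ}
    (hω : IsPrimitiveRoot ω p) (hp : p ≠ 0) (f : R⟦X⟧) :
    ∑ k ∈ Finset.range p, rescale (ω ^ k) f =
      p • expand p hp (PowerSeries.mk fun m => coeff (p * m) f) := by
  ext j
  rw [map_sum, map_nsmul]
  simp only [coeff_rescale, ← Finset.sum_mul, hω.sum_pow_pow_eq_ite]
  split_ifs with hj
  · obtain ⟨m, rfl⟩ := hj
    simp [coeff_expand_mul, nsmul_eq_mul]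
  · simp [coeff_expand_of_not_dvd p hp _ hj]

theorem prod_rescale_eq_subst_pow_general (n p : ℕ) (hp : 1 ≤ p)
    (ω : ℂ) (hω : IsPrimitiveRoot ω p) (G H : ℂ⟦X⟧)
    (hG0 : constantCoeff G = 1)
    (hG : X * (d⁄dX ℂ G) =
      G * (PowerSeries.mk fun j => if j = 0 then 0 else (Nat.choose (n * j) j : ℂ)))
    (hH0 : constantCoeff H = 1)
    (hH : X * (d⁄dX ℂ H) =
      H * (PowerSeries.mk fun m =>
        if m = 0 then 0 else (Nat.choose (n * m * p) (m * p) : ℂ))) :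
    ∏ k ∈ Finset.range p, PowerSeries.rescale (ω ^ k) G =
      PowerSeries.mk fun k => if p ∣ k then PowerSeries.coeff (k / p) H else 0 := by
  have hp0 : p ≠ 0 := Nat.one_le_iff_ne_zero.mp hp
  set F : ℂ⟦X⟧ := PowerSeries.mk fun j => if j = 0 then 0 else (Nat.choose (n * j) j : ℂ)
  set Fp : ℂ⟦X⟧ := PowerSeries.mk fun m =>
    if m = 0 then 0 else (Nat.choose (n * m * p) (m * p) : ℂ)
  have hFp : (PowerSeries.mk fun m => coeff (p * m) F) = Fp := by
    ext m
    simp only [F, Fp, coeff_mk, mul_eq_zero, hp0, or_false, mul_comm p, mul_assoc]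
  have hsum : ∑ k ∈ Finset.range p, rescale (ω ^ k) F = p • expand p hp0 Fp := by
    rw [hω.sum_rescale_pow_eq_nsmul_expand hp0, hFp]
  have hexpand : (PowerSeries.mk fun k => if p ∣ k then coeff (k / p) H else 0) =
      expand p hp0 H := by
    ext k; rw [coeff_mk, coeff_expand]
  rw [hexpand]
  refine eq_of_X_mul_derivative_eq_mul (F := p • expand p hp0 Fp) ?_ ?_ ?_ ?_
  · simp [Fp]
  · simp [map_prod, constantCoeff_rescale, hG0, hH0]
  · rw [← hsum]
    refine X_mul_derivative_prod _ _ _ fun k _ => ?_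
    rw [← rescale_X_mul_derivative, hG, map_mul]
  · rw [X_mul_derivative_expand, hH, map_mul, mul_smul_comm]

/-- The identity `e(*binom(np,p)) = ∏_{k=0}^{p−1} e(*binom(n,1))(ω^k z^{1/p})`:
if `G` and `H` are the power series with constant term 1 whose logarithmic
derivatives have coefficients `binom(nj,j)` and `binom(nmp,mp)` respectively,
and `ω` is a primitive `p`-th root of unity, then
`∏_{k=0}^{p−1} G(ω^k X) = H(X^p)`. -/
theorem prod_rescale_eq_subst_pow (n p : ℕ) (hn : 1 ≤ n) (hp : 1 ≤ p)
    (ω : ℂ) (hω : IsPrimitiveRoot ω p) (G H : ℂ⟦X⟧)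
    (hG0 : constantCoeff G = 1)
    (hG : X * (d⁄dX ℂ G) =
      G * (PowerSeries.mk fun j => if j = 0 then 0 else (Nat.choose (n * j) j : ℂ)))
    (hH0 : constantCoeff H = 1)
    (hH : X * (d⁄dX ℂ H) =
      H * (PowerSeries.mk fun m =>
        if m = 0 then 0 else (Nat.choose (n * m * p) (m * p) : ℂ))) :
    ∏ k ∈ Finset.range p, PowerSeries.rescale (ω ^ k) G =
      PowerSeries.mk fun k => if p ∣ k then PowerSeries.coeff (k / p) H else 0 :=
  prod_rescale_eq_subst_pow_general n p hp ω hω G H hG0 hG hH0 hH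
end
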